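/- For integer n ≥ 2 and positive integer a, define f̃_n(a) = ∑_{k=0}^{a-1}(1-k²/a²)^n. Then f̃_n(a) = a·(2^n n!)²/(2n+1)! + 1/2 + O(a^{-2}) as a → ∞; in particular |f̃_n(a) - a(2^n n!)²/(2n+1)! - 1/2| ≤ C a^{-2} for some constant C depending only on n. -/

import Mathlib

/-!
Expanding binomially, `∑ₖ (1 - k²/a²)ⁿ = ∑ₚ (-1)ᵖ C(n,p) Tₚ` with `Tₚ = a⁻²ᵖ ∑_{k<a} k²ᵖ`.
Faulhaber's formula gives `Tₚ = a/(2p+1) - 1/2 + p/(6a) + O(a⁻²)` for `p ≥ 1`, while `T₀ = a`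
exceeds this main term by exactly `1/2`. Against the alternating binomial weights the terms
`-1/2` and `p/(6a)` cancel, since an `n`-th finite difference kills polynomials of degree `< n`,
and `∑ₚ (-1)ᵖ C(n,p)/(2p+1) = (2ⁿ n!)²/(2n+1)!` is the partial fraction expansion of
`n!/(x(x+1)⋯(x+n))` at `x = 1/2`.
-/

open Finset
open scoped Nat

theorem sum_one_sub_pow {R ι : Type*} [CommRing R] (s : Finset ι) (x : ι → R) (n : ℕ) :
    ∑ i ∈ s, (1 - x i) ^ n = ∑ p ∈ range (n + 1), (-1) ^ p * n.choose p * ∑ i ∈ s, x i ^ p := by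
  simp_rw [mul_sum]
  rw [sum_comm]
  refine sum_congr rfl fun i _ => ?_
  rw [sub_eq_neg_add, add_pow]
  refine sum_congr rfl fun p _ => ?_
  rw [neg_pow]
  ring

theorem sum_neg_one_pow_mul_choose_mul_pow_eq_zero {R : Type*} [CommRing R] {j n : ℕ}
    (h : j < n) : ∑ p ∈ range (n + 1), (-1) ^ p * n.choose p * (p : R) ^ j = 0 := by
  have hΔ := fwdDiff_iter_eq_sum_shift (h := 1) (fun r : R => r ^ j) n 0
  rw [fwdDiff_iter_pow_eq_zero_of_lt h] at hΔ
  have hsigned := congrArg (fun t : R => (-1) ^ n * t) hΔ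
  simp only [Pi.zero_apply, mul_zero, mul_sum, zero_add, nsmul_eq_mul, mul_one] at hsigned
  rw [hsigned]
  refine sum_congr rfl fun p hp => ?_
  have hp : p ≤ n := Nat.lt_succ_iff.mp (mem_range.mp hp)
  rw [zsmul_eq_mul]
  push_cast
  rw [← mul_assoc, ← mul_assoc, ← pow_add, show n + (n - p) = p + 2 * (n - p) by omega, pow_add,
    pow_mul]
  simp

theorem sum_neg_one_pow_mul_choose_div_add {K : Type*} [Field K] (n : ℕ) (x : K)
    (hx : ∀ i ≤ n, x + i ≠ 0) :
    ∑ p ∈ range (n + 1), (-1) ^ p * n.choose p / (x + p) =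
      n ! / ∏ i ∈ range (n + 1), (x + i) := by
  induction n generalizing x with
  | zero => simp
  | succ n ih =>
    have hpascal : ∑ p ∈ range (n + 2), (-1) ^ p * ((n + 1).choose p : K) / (x + p) =
        ∑ p ∈ range (n + 1), (-1) ^ p * n.choose p / (x + p) -
          ∑ p ∈ range (n + 1), (-1) ^ p * n.choose p / (x + 1 + p) := by
      have hsplit := sum_choose_succ_mul (fun p _ => ((-1) ^ p / (x + p) : K)) n
      rw [sub_eq_add_neg, ← sum_neg_distrib]
      calc _ = ∑ p ∈ range (n + 2), ((n + 1).choose p : K) * ((-1) ^ p / (x + p)) :=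
            sum_congr rfl fun p _ => by ring
        _ = _ := by
          rw [hsplit]
          congr 1 <;> refine sum_congr rfl fun p _ => ?_ <;> push_cast <;> ring
    have hx₀ : x ≠ 0 := by simpa using hx 0 (Nat.zero_le _)
    have hx₁ : ∀ i ≤ n, x + 1 + i ≠ 0 := fun i hi => by
      simpa [add_assoc, add_comm (1 : K)] using hx (i + 1) (by omega)
    have hA₀ : ∏ i ∈ range (n + 1), (x + i) ≠ 0 :=
      prod_ne_zero_iff.mpr fun i hi => hx i (by simp at hi; omega)
    have hP₀ : ∏ i ∈ range (n + 1), (x + 1 + i) ≠ 0 :=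
      prod_ne_zero_iff.mpr fun i hi => hx₁ i (by simp at hi; omega)
    have hshift : (∏ i ∈ range (n + 1), (x + i)) * (x + (n + 1 : ℕ)) =
        x * ∏ i ∈ range (n + 1), (x + 1 + i) := by
      rw [← prod_range_succ, prod_range_succ', mul_comm]
      push_cast
      simp only [add_zero, add_assoc, add_comm (1 : K)]
    rw [hpascal, ih x fun i hi => hx i (by omega), ih (x + 1) hx₁, prod_range_succ _ (n + 1),
      hshift, Nat.factorial_succ]
    field_simp
    push_cast at hshift ⊢
    linear_combination -(n ! : K) * hshift

theorem sum_neg_one_pow_mul_choose_div_two_mul_add_one {K : Type*} [Field K] [CharZero K]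
    (n : ℕ) :
    ∑ p ∈ range (n + 1), (-1) ^ p * n.choose p / (2 * p + 1 : K) =
      (2 ^ n * n ! : K) ^ 2 / (2 * n + 1)! := by
  have hhalf (i : ℕ) : (1 : K) / 2 + i = ((2 * i + 1 : ℕ) : K) / 2 := by push_cast; ring
  have hodd₀ (i : ℕ) : ((2 * i + 1 : ℕ) : K) ≠ 0 := Nat.cast_ne_zero.mpr (2 * i).succ_ne_zero
  have h := sum_neg_one_pow_mul_choose_div_add n ((1 : K) / 2) fun i _ => by
    rw [hhalf]
    exact div_ne_zero (hodd₀ i) two_ne_zero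
  have hprod : ∏ i ∈ range (n + 1), ((1 : K) / 2 + i) = ((2 * n + 1)‼ : K) / 2 ^ (n + 1) := by
    simp_rw [hhalf]
    rw [prod_div_distrib, prod_const, card_range, ← Nat.cast_prod, prod_range_succ',
      Nat.doubleFactorial_eq_prod_odd, mul_zero, zero_add, mul_one]
  have hfact : ((2 * n + 1)! : K) = (2 * n + 1)‼ * (2 ^ n * n !) := by
    rw [Nat.factorial_eq_mul_doubleFactorial, Nat.doubleFactorial_two_mul]
    push_cast; ring
  rw [hprod] at h
  simp_rw [hhalf, div_div_eq_mul_div, mul_div_right_comm _ (2 : K), ← sum_mul] at h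
  push_cast at h
  rw [hfact]
  field_simp at h ⊢
  linear_combination h / 2

theorem exists_abs_sum_range_pow_sub_le (m : ℕ) :
    ∃ C : ℝ, ∀ a : ℕ, 0 < a →
      |∑ k ∈ range a, (k : ℝ) ^ (m + 2) -
          ((a : ℝ) ^ (m + 3) / (m + 3) - (a : ℝ) ^ (m + 2) / 2 +
            (m + 2) * (a : ℝ) ^ (m + 1) / 12)| ≤
        C * (a : ℝ) ^ m := by
  refine ⟨∑ i ∈ Ico 3 (m + 3), |(bernoulli i : ℝ)| * (m + 3).choose i / (m + 3), fun a ha => ?_⟩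
  have hfaulhaber : ∑ k ∈ range a, (k : ℝ) ^ (m + 2) =
      ∑ i ∈ range (m + 3),
        (bernoulli i : ℝ) * (m + 3).choose i * (a : ℝ) ^ (m + 3 - i) / (m + 3) := by
    exact_mod_cast congrArg (Rat.cast (K := ℝ)) (sum_range_pow a (m + 2))
  have hleading :
      ∑ i ∈ range 3, (bernoulli i : ℝ) * (m + 3).choose i * (a : ℝ) ^ (m + 3 - i) / (m + 3) =
      (a : ℝ) ^ (m + 3) / (m + 3) - (a : ℝ) ^ (m + 2) / 2 + (m + 2) * (a : ℝ) ^ (m + 1) / 12 := by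
    rw [sum_range_succ, sum_range_succ, sum_range_one, bernoulli_zero, bernoulli_one,
      bernoulli_eq_bernoulli'_of_ne_one (by norm_num), bernoulli'_two, Nat.cast_choose_two,
      Nat.choose_zero_right, Nat.choose_one_right, show m + 3 - 1 = m + 2 by omega,
      show m + 3 - 2 = m + 1 by omega]
    push_cast
    field_simp
    ring
  rw [hfaulhaber, ← sum_range_add_sum_Ico _ (by omega : 3 ≤ m + 3), hleading, add_sub_cancel_left,
    sum_mul]
  refine (abs_sum_le_sum_abs _ _).trans (sum_le_sum fun i hi => ?_)
  rw [mem_Ico] at hi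
  rw [abs_div, abs_mul, abs_mul, Nat.abs_cast, abs_pow, Nat.abs_cast,
    abs_of_pos (by positivity : (0 : ℝ) < m + 3), mul_div_right_comm]
  gcongr
  exacts [Nat.one_le_cast.mpr ha, by omega]

noncomputable def evenPowerSumMainTerm (a : ℝ) (p : ℕ) : ℝ :=
  a / (2 * p + 1) - 1 / 2 + p / (6 * a)

theorem sum_neg_one_pow_mul_choose_mul_evenPowerSumMainTerm {n : ℕ} (hn : 2 ≤ n) (a : ℝ) :
    ∑ p ∈ range (n + 1), (-1) ^ p * n.choose p * evenPowerSumMainTerm a p =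
      a * (2 ^ n * n ! : ℝ) ^ 2 / (2 * n + 1)! := by
  have hsplit (p : ℕ) : (-1) ^ p * n.choose p * evenPowerSumMainTerm a p =
      a * ((-1) ^ p * n.choose p / (2 * p + 1)) - 1 / 2 * ((-1) ^ p * n.choose p * (p : ℝ) ^ 0) +
        1 / (6 * a) * ((-1) ^ p * n.choose p * (p : ℝ) ^ 1) := by
    unfold evenPowerSumMainTerm; ring
  simp only [hsplit, sum_add_distrib, sum_sub_distrib, ← mul_sum,
    sum_neg_one_pow_mul_choose_div_two_mul_add_one,
    sum_neg_one_pow_mul_choose_mul_pow_eq_zero (by omega : 0 < n),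
    sum_neg_one_pow_mul_choose_mul_pow_eq_zero (by omega : 1 < n)]
  ring

theorem exists_abs_sum_sq_div_sq_pow_sub_evenPowerSumMainTerm_le (p : ℕ) :
    ∃ C : ℝ, ∀ a : ℕ, 0 < a →
      |∑ k ∈ range a, ((k : ℝ) ^ 2 / (a : ℝ) ^ 2) ^ (p + 1) - evenPowerSumMainTerm a (p + 1)| ≤
        C / (a : ℝ) ^ 2 := by
  obtain ⟨C, hC⟩ := exists_abs_sum_range_pow_sub_le (2 * p)
  refine ⟨C, fun a ha => ?_⟩
  have ha' : (0 : ℝ) < a := Nat.cast_pos.mpr ha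
  have hnormalize :
      ∑ k ∈ range a, ((k : ℝ) ^ 2 / (a : ℝ) ^ 2) ^ (p + 1) - evenPowerSumMainTerm a (p + 1) =
        (∑ k ∈ range a, (k : ℝ) ^ (2 * p + 2) - ((a : ℝ) ^ (2 * p + 3) / (2 * p + 3) -
          (a : ℝ) ^ (2 * p + 2) / 2 + (2 * p + 2) * (a : ℝ) ^ (2 * p + 1) / 12)) /
        (a : ℝ) ^ (2 * p + 2) := by
    simp_rw [div_pow, ← pow_mul, mul_add_one, ← sum_div, evenPowerSumMainTerm]
    field_simp
    push_cast
    ring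
  have hCa := hC a ha
  push_cast at hCa
  rw [hnormalize, abs_div, abs_of_pos (pow_pos ha' _),
    div_le_div_iff₀ (pow_pos ha' _) (pow_pos ha' _)]
  calc _ ≤ C * (a : ℝ) ^ (2 * p) * (a : ℝ) ^ 2 := by gcongr
    _ = C * (a : ℝ) ^ (2 * p + 2) := by ring

theorem partition_asymptotic (n : ℕ) (hn : 2 ≤ n) :
    ∃ C : ℝ, ∀ a : ℕ, 0 < a →
      |(∑ k ∈ Finset.range a, (1 - (k : ℝ) ^ 2 / (a : ℝ) ^ 2) ^ n) -
          ((a : ℝ) * (2 ^ n * n.factorial : ℝ) ^ 2 / (2 * n + 1).factorial + 1 / 2)| ≤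
        C / (a : ℝ) ^ 2 := by
  choose C hC using exists_abs_sum_sq_div_sq_pow_sub_evenPowerSumMainTerm_le
  refine ⟨∑ p ∈ range n, n.choose (p + 1) * C p, fun a ha => ?_⟩
  have hT₀ :
      ∑ k ∈ range a, ((k : ℝ) ^ 2 / (a : ℝ) ^ 2) ^ 0 - evenPowerSumMainTerm a 0 = 1 / 2 := by
    simp [evenPowerSumMainTerm]
  have herror : (∑ k ∈ range a, (1 - (k : ℝ) ^ 2 / (a : ℝ) ^ 2) ^ n) -
      ((a : ℝ) * (2 ^ n * n ! : ℝ) ^ 2 / (2 * n + 1)! + 1 / 2) =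
      ∑ p ∈ range n, (-1) ^ (p + 1) * n.choose (p + 1) *
        (∑ k ∈ range a, ((k : ℝ) ^ 2 / (a : ℝ) ^ 2) ^ (p + 1) -
          evenPowerSumMainTerm a (p + 1)) := by
    rw [sum_one_sub_pow, ← sum_neg_one_pow_mul_choose_mul_evenPowerSumMainTerm hn, ← sub_sub,
      ← sum_sub_distrib]
    simp_rw [← mul_sub]
    rw [sum_range_succ', hT₀]
    simp
  rw [herror, sum_div]
  refine (abs_sum_le_sum_abs _ _).trans (sum_le_sum fun p _ => ?_)
  rw [abs_mul, abs_mul, abs_pow, abs_neg, abs_one, one_pow, one_mul, Nat.abs_cast, mul_div_assoc]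
  gcongr
  exact hC p a ha
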